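/- Let ε₁ > ε₂ > 0 and let u, v be positive C¹ functions on an open set D. Define w̄ = (v + ε₁)^{-1}[(u + ε₂)² - (v + ε₁)²]⁺ and w_ = (u + ε₂)^{-1}[(u + ε₂)² - (v + ε₁)²]⁺, where f⁺ = max(f, 0). Then on the set D₊ = {x : u(x) + ε₂ > v(x) + ε₁} one has, pointwise, -(∇u·∇w_ - ∇v·∇w̄) = -[|∇u - ((u+ε₂)/(v+ε₁))∇v|² + |∇v - ((v+ε₁)/(u+ε₂))∇u|²] ≤ 0, and w̄ = w_ = 0 off D₊. -/

import Mathlib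

open Set

open InnerProductSpace in
private lemma grad_aux {F : Type*} [NormedAddCommGroup F] [InnerProductSpace ℝ F]
    [CompleteSpace F] (f g h : F → ℝ) (x : F)
    (hf : DifferentiableAt ℝ f x) (hg : DifferentiableAt ℝ g x)
    (hh : DifferentiableAt ℝ h x) (hfx : f x ≠ 0) :
    gradient (fun z => (f z)⁻¹ * ((g z) ^ 2 - (h z) ^ 2)) x
      = ((f x)⁻¹ * (2 * g x)) • gradient g x - ((f x)⁻¹ * (2 * h x)) • gradient h x
        - (((f x) ^ 2)⁻¹ * ((g x) ^ 2 - (h x) ^ 2)) • gradient f x := by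
  have hf' : HasFDerivAt f (toDual ℝ F (gradient f x)) x :=
    hasGradientAt_iff_hasFDerivAt.mp hf.hasGradientAt
  have hg' : HasFDerivAt g (toDual ℝ F (gradient g x)) x :=
    hasGradientAt_iff_hasFDerivAt.mp hg.hasGradientAt
  have hh' : HasFDerivAt h (toDual ℝ F (gradient h x)) x :=
    hasGradientAt_iff_hasFDerivAt.mp hh.hasGradientAt
  have hinv : HasFDerivAt (fun z => (f z)⁻¹)
      ((-((f x) ^ 2)⁻¹) • (toDual ℝ F (gradient f x))) x :=
    (hasDerivAt_inv hfx).comp_hasFDerivAt x hf'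
  have hg2 : HasFDerivAt (fun z => (g z) ^ 2)
      (((2:ℕ) * g x ^ 1) • (toDual ℝ F (gradient g x))) x :=
    (hasDerivAt_pow 2 (g x)).comp_hasFDerivAt x hg'
  have hh2 : HasFDerivAt (fun z => (h z) ^ 2)
      (((2:ℕ) * h x ^ 1) • (toDual ℝ F (gradient h x))) x :=
    (hasDerivAt_pow 2 (h x)).comp_hasFDerivAt x hh'
  have H := hinv.mul (hg2.sub hh2)
  have H2 := (hasFDerivAt_iff_hasGradientAt.mp H).gradient
  rw [show (fun z => (f z)⁻¹ * (g z ^ 2 - h z ^ 2)) = (fun z => (f z)⁻¹) * ((fun z => g z ^ 2) - fun z => h z ^ 2) from rfl, H2]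
  apply (toDual ℝ F).injective
  rw [LinearIsometryEquiv.apply_symm_apply]
  ext y
  simp only [ContinuousLinearMap.add_apply, ContinuousLinearMap.smul_apply,
    ContinuousLinearMap.sub_apply, ContinuousLinearMap.neg_apply, toDual_apply_apply, Pi.sub_apply,
    inner_sub_left, real_inner_smul_left, smul_eq_mul]
  push_cast
  ring

/-- The Du–Huang test functions: with `w̄ = (v+ε₁)⁻¹[(u+ε₂)² - (v+ε₁)²]⁺` and
`w_ = (u+ε₂)⁻¹[(u+ε₂)² - (v+ε₁)²]⁺`, on the set `D₊ = {u+ε₂ > v+ε₁}` the gradient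
combination equals minus a sum of two squares (hence is `≤ 0`), and `w̄ = w_ = 0` off `D₊`. -/
theorem du_huang_test_functions {N : ℕ} (D : Set (EuclideanSpace ℝ (Fin N))) (hD : IsOpen D)
    (ε₁ ε₂ : ℝ) (hε : ε₁ > ε₂) (hε₂ : ε₂ > 0)
    (u v : EuclideanSpace ℝ (Fin N) → ℝ)
    (hu_pos : ∀ x ∈ D, 0 < u x) (hv_pos : ∀ x ∈ D, 0 < v x)
    (hu_diff : ∀ x ∈ D, DifferentiableAt ℝ u x) (hv_diff : ∀ x ∈ D, DifferentiableAt ℝ v x)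
    (hu_C1 : ContDiffOn ℝ 1 u D) (hv_C1 : ContDiffOn ℝ 1 v D) :
    (∀ x ∈ D, u x + ε₂ > v x + ε₁ →
      -((inner ℝ (gradient u x)
            (gradient (fun z => (u z + ε₂)⁻¹ * ((u z + ε₂) ^ 2 - (v z + ε₁) ^ 2)) x) : ℝ)
        - (inner ℝ (gradient v x)
            (gradient (fun z => (v z + ε₁)⁻¹ * ((u z + ε₂) ^ 2 - (v z + ε₁) ^ 2)) x) : ℝ))
      = -(‖gradient u x - ((u x + ε₂) / (v x + ε₁)) • gradient v x‖ ^ 2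
          + ‖gradient v x - ((v x + ε₁) / (u x + ε₂)) • gradient u x‖ ^ 2) ∧
      -((inner ℝ (gradient u x)
            (gradient (fun z => (u z + ε₂)⁻¹ * ((u z + ε₂) ^ 2 - (v z + ε₁) ^ 2)) x) : ℝ)
        - (inner ℝ (gradient v x)
            (gradient (fun z => (v z + ε₁)⁻¹ * ((u z + ε₂) ^ 2 - (v z + ε₁) ^ 2)) x) : ℝ))
        ≤ 0) ∧
    (∀ x ∈ D, ¬ (u x + ε₂ > v x + ε₁) →
      (v x + ε₁)⁻¹ * max ((u x + ε₂) ^ 2 - (v x + ε₁) ^ 2) 0 = 0 ∧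
      (u x + ε₂)⁻¹ * max ((u x + ε₂) ^ 2 - (v x + ε₁) ^ 2) 0 = 0) := by
  constructor
  · intro x hx _
    have ha : (0:ℝ) < u x + ε₂ := by linarith [hu_pos x hx]
    have hb : (0:ℝ) < v x + ε₁ := by linarith [hv_pos x hx, hε]
    have hua : DifferentiableAt ℝ (fun z => u z + ε₂) x := (hu_diff x hx).add_const _
    have hvb : DifferentiableAt ℝ (fun z => v z + ε₁) x := (hv_diff x hx).add_const _
    have hgu : gradient (fun z => u z + ε₂) x = gradient u x := by
      simp [gradient, fderiv_add_const]
    have hgv : gradient (fun z => v z + ε₁) x = gradient v x := by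
      simp [gradient, fderiv_add_const]
    have h1 := grad_aux (fun z => u z + ε₂) (fun z => u z + ε₂) (fun z => v z + ε₁) x
      hua hua hvb ha.ne'
    have h2 := grad_aux (fun z => v z + ε₁) (fun z => u z + ε₂) (fun z => v z + ε₁) x
      hvb hua hvb hb.ne'
    rw [hgu, hgv] at h1 h2
    set a := u x + ε₂
    set b := v x + ε₁
    set gu := gradient u x
    set gv := gradient v x
    have key : -((inner ℝ gu
          (gradient (fun z => (u z + ε₂)⁻¹ * ((u z + ε₂) ^ 2 - (v z + ε₁) ^ 2)) x) : ℝ)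
        - (inner ℝ gv
          (gradient (fun z => (v z + ε₁)⁻¹ * ((u z + ε₂) ^ 2 - (v z + ε₁) ^ 2)) x) : ℝ))
        = -(‖gu - (a / b) • gv‖ ^ 2 + ‖gv - (b / a) • gu‖ ^ 2) := by
      rw [h1, h2]
      have e1 : ‖gu - (a / b) • gv‖ ^ 2
          = ‖gu‖ ^ 2 - 2 * ((a / b) * (inner ℝ gu gv : ℝ)) + (a / b) ^ 2 * ‖gv‖ ^ 2 := by
        rw [norm_sub_sq_real, real_inner_smul_right, norm_smul]
        rw [Real.norm_eq_abs, mul_pow, sq_abs]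
      have e2 : ‖gv - (b / a) • gu‖ ^ 2
          = ‖gv‖ ^ 2 - 2 * ((b / a) * (inner ℝ gv gu : ℝ)) + (b / a) ^ 2 * ‖gu‖ ^ 2 := by
        rw [norm_sub_sq_real, real_inner_smul_right, norm_smul]
        rw [Real.norm_eq_abs, mul_pow, sq_abs]
      rw [e1, e2]
      simp only [inner_sub_right, real_inner_smul_right]
      rw [real_inner_comm gv gu]
      rw [real_inner_self_eq_norm_sq gu, real_inner_self_eq_norm_sq gv]
      field_simp
      ring
    refine ⟨key, ?_⟩
    rw [key]
    have := sq_nonneg ‖gu - (a / b) • gv‖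
    have := sq_nonneg ‖gv - (b / a) • gu‖
    linarith
  · intro x hx hxn
    have ha : (0:ℝ) < u x + ε₂ := by linarith [hu_pos x hx]
    have hb : (0:ℝ) < v x + ε₁ := by linarith [hv_pos x hx, hε]
    have hle : u x + ε₂ ≤ v x + ε₁ := le_of_not_gt hxn
    have hsq : (u x + ε₂) ^ 2 - (v x + ε₁) ^ 2 ≤ 0 := by nlinarith
    rw [max_eq_right hsq]
    simp
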